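/- arXiv:2605.22223 — 3 statements merged into one kernel-verified Lean document; each statement's English description precedes it below -/
import Mathlib

section
/- The volume of the generalized unit ball B^d_{p_1···p_d} = {x ∈ R^d : |x_1|^{p_1} + ··· + |x_d|^{p_d} ≤ 1}, with p_1,…,p_d > 0, equals 2^d · Γ(1+1/p_1)···Γ(1+1/p_d) / Γ(1 + 1/p_1 + ··· + 1/p_d). -/
/-!
Dirichlet's argument. Let `g x = ∑ i, |x i| ^ p i` and `s = ∑ i, 1 / p i`. Since
`exp (-g x) = ∫_{g x}^∞ e^{-u} du`, Tonelli gives `∫ exp (-g) = ∫_0^∞ e^{-u} vol {g ≤ u} du`. The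
diagonal substitution `x i ↦ u ^ (1 / p i) * x i` shows `vol {g ≤ u} = u ^ s * vol {g ≤ 1}`, so
the right side is `Γ(s + 1) * vol {g ≤ 1}`, while the left side factorises as
`∏ i, ∫ exp (-|t| ^ p i) dt = ∏ i, 2 * Γ(1 + 1 / p i)`.
-/

open MeasureTheory Real Set
open scoped ENNReal

theorem lintegral_Ici_exp_neg (a : ℝ) :
    ∫⁻ u in Ici a, ENNReal.ofReal (exp (-u)) = ENNReal.ofReal (exp (-a)) := by
  have hint : IntegrableOn (fun u : ℝ => exp (-u)) (Ioi a) := by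
    simpa using exp_neg_integrableOn_Ioi a one_pos
  rw [setLIntegral_congr Ioi_ae_eq_Ici.symm, ← ofReal_integral_eq_lintegral_ofReal hint
    (ae_of_all _ fun u => (exp_pos _).le), integral_exp_neg_Ioi]

theorem lintegral_Ioi_exp_neg_mul_rpow {s : ℝ} (hs : -1 < s) :
    ∫⁻ u in Ioi 0, ENNReal.ofReal (exp (-u) * u ^ s) = ENNReal.ofReal (Gamma (s + 1)) := by
  have hs' : 0 < s + 1 := by linarith
  have hint := GammaIntegral_convergent hs'
  rw [add_sub_cancel_right] at hint
  rw [← ofReal_integral_eq_lintegral_ofReal hint, Gamma_eq_integral hs', add_sub_cancel_right]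
  exact (ae_restrict_iff' measurableSet_Ioi).mpr
    (ae_of_all _ fun u hu => mul_nonneg (exp_pos _).le (rpow_nonneg (le_of_lt hu) _))

theorem integrable_comp_abs_of_integrableOn_Ioi {E : Type*} [NormedAddCommGroup E] {f : ℝ → E}
    (hf : IntegrableOn f (Ioi 0)) : Integrable fun x => f |x| := by
  have hpos : IntegrableOn (fun x => f |x|) (Ioi 0) :=
    hf.congr_fun (fun x hx => by rw [abs_of_pos hx]) measurableSet_Ioi
  have hneg : IntegrableOn (fun x => f |x|) (Iio 0) := by
    have := IntegrableOn.comp_neg_Iio (c := (0 : ℝ)) (by rwa [neg_zero])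
    simpa only [abs_neg] using this
  rw [← integrableOn_univ, ← Iio_union_Ici]
  exact hneg.union (Iff.mpr integrableOn_Ici_iff_integrableOn_Ioi hpos)

section LayerCake

variable {α : Type*} [MeasurableSpace α] {μ : Measure α} [SFinite μ] {g : α → ℝ}

theorem lintegral_exp_neg_eq_lintegral_measure_le (hg : Measurable g) :
    ∫⁻ x, ENNReal.ofReal (exp (-g x)) ∂μ =
      ∫⁻ u, ENNReal.ofReal (exp (-u)) * μ {x | g x ≤ u} := by
  set F : α → ℝ → ℝ≥0∞ := fun x u =>
    {x | g x ≤ u}.indicator (fun _ => ENNReal.ofReal (exp (-u))) x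
  have hF : Measurable (Function.uncurry F) :=
    Measurable.ite (measurableSet_le (hg.comp measurable_fst) measurable_snd)
      (by fun_prop) measurable_const
  calc ∫⁻ x, ENNReal.ofReal (exp (-g x)) ∂μ = ∫⁻ x, ∫⁻ u, F x u ∂volume ∂μ := by
        congr with x
        rw [← lintegral_Ici_exp_neg, ← lintegral_indicator measurableSet_Ici]
        rfl
    _ = ∫⁻ u, ∫⁻ x, F x u ∂μ ∂volume := lintegral_lintegral_swap hF.aemeasurable
    _ = _ := by
        congr with u
        exact lintegral_indicator_const (measurableSet_le hg measurable_const) _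

theorem lintegral_exp_neg_eq_Gamma_mul_measure_le_one (hg : Measurable g) (hg0 : ∀ x, 0 ≤ g x)
    {s : ℝ} (hs : -1 < s)
    (hscale : ∀ u, 0 < u → μ {x | g x ≤ u} = ENNReal.ofReal (u ^ s) * μ {x | g x ≤ 1}) :
    ∫⁻ x, ENNReal.ofReal (exp (-g x)) ∂μ = ENNReal.ofReal (Gamma (s + 1)) * μ {x | g x ≤ 1} := by
  have hneg : ∀ u < 0, μ {x | g x ≤ u} = 0 := fun u hu => by
    rw [measure_eq_zero_iff_ae_notMem]
    exact ae_of_all _ fun x hx => absurd ((hg0 x).trans hx) hu.not_ge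
  calc ∫⁻ x, ENNReal.ofReal (exp (-g x)) ∂μ
      = ∫⁻ u, ENNReal.ofReal (exp (-u)) * μ {x | g x ≤ u} :=
        lintegral_exp_neg_eq_lintegral_measure_le hg
    _ = ∫⁻ u in Ici 0, ENNReal.ofReal (exp (-u)) * μ {x | g x ≤ u} := by
        rw [← lintegral_indicator measurableSet_Ici]
        congr with u
        by_cases hu : 0 ≤ u
        · rw [indicator_of_mem (mem_Ici.mpr hu)]
        · rw [indicator_of_notMem (by simpa using hu), hneg u (not_le.mp hu), mul_zero]
    _ = ∫⁻ u in Ioi 0, ENNReal.ofReal (exp (-u) * u ^ s) * μ {x | g x ≤ 1} := by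
        rw [setLIntegral_congr Ioi_ae_eq_Ici.symm]
        refine setLIntegral_congr_fun measurableSet_Ioi fun u hu => ?_
        rw [hscale u hu, ← mul_assoc, ENNReal.ofReal_mul (exp_pos _).le]
    _ = _ := by
        rw [lintegral_mul_const _ (by fun_prop), lintegral_Ioi_exp_neg_mul_rpow hs]

end LayerCake

theorem volume_sum_abs_rpow_le {ι : Type*} [Fintype ι] {p : ι → ℝ} (hp : ∀ i, 0 < p i)
    {u : ℝ} (hu : 0 < u) :
    volume {x : ι → ℝ | ∑ i, |x i| ^ p i ≤ u} =
      ENNReal.ofReal (u ^ ∑ i, 1 / p i) * volume {x : ι → ℝ | ∑ i, |x i| ^ p i ≤ 1} := by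
  classical
  set T : (ι → ℝ) →ₗ[ℝ] ι → ℝ := Matrix.toLin' (Matrix.diagonal fun i => u ^ (-(1 / p i)))
  have hdet : LinearMap.det T = (u ^ ∑ i, 1 / p i)⁻¹ := by
    rw [LinearMap.det_toLin', Matrix.det_diagonal, ← rpow_neg hu.le, ← Finset.sum_neg_distrib,
      rpow_sum_of_pos hu]
  have hT : ∀ x i, |T x i| ^ p i = u⁻¹ * |x i| ^ p i := fun x i => by
    rw [Matrix.toLin'_apply, Matrix.mulVec_diagonal, abs_mul,
      mul_rpow (abs_nonneg _) (abs_nonneg _), abs_of_pos (rpow_pos_of_pos hu _), ← rpow_mul hu.le, neg_mul, one_div_mul_cancel (hp i).ne',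
      rpow_neg_one]
  have hpre : {x : ι → ℝ | ∑ i, |x i| ^ p i ≤ u} = T ⁻¹' {x | ∑ i, |x i| ^ p i ≤ 1} := by
    ext x
    simp only [mem_ofPred_eq, mem_preimage, hT, ← Finset.mul_sum, inv_mul_le_iff₀ hu, mul_one]
  rw [hpre, Measure.addHaar_preimage_linearMap _ (by rw [hdet]; positivity), hdet, inv_inv,
    abs_of_pos (by positivity)]

theorem lintegral_exp_neg_sum_abs_rpow {ι : Type*} [Fintype ι] {p : ι → ℝ} (hp : ∀ i, 0 < p i) :
    ∫⁻ x : ι → ℝ, ENNReal.ofReal (exp (-∑ i, |x i| ^ p i)) =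
      ENNReal.ofReal (∏ i, 2 * Gamma (1 / p i + 1)) := by
  have hint : ∀ i, Integrable fun t : ℝ => exp (-|t| ^ p i) := fun i =>
    integrable_comp_abs_of_integrableOn_Ioi (f := fun t => exp (-t ^ p i)) <| by
      simpa using integrableOn_rpow_mul_exp_neg_rpow neg_one_lt_zero (hp i)
  simp_rw [← Finset.sum_neg_distrib, exp_sum]
  rw [volume_pi, ← ofReal_integral_eq_lintegral_ofReal (Integrable.fintype_prod hint)
    (ae_of_all _ fun x => Finset.prod_nonneg fun i _ => (exp_pos _).le),
    integral_fintype_prod_eq_prod (fun i (t : ℝ) => exp (-|t| ^ p i))]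
  congr 1
  refine Finset.prod_congr rfl fun i _ => ?_
  rw [integral_comp_abs (f := fun t => exp (-t ^ p i)), integral_exp_neg_rpow (hp i)]

/-- Volume of the generalized unit ball `{x : |x_1|^{p_1} + ⋯ + |x_d|^{p_d} ≤ 1}`. -/
theorem volume_generalized_unit_ball (d : ℕ) (p : Fin d → ℝ) (hp : ∀ i, 0 < p i) :
    volume {x : Fin d → ℝ | ∑ i, |x i| ^ (p i) ≤ 1} =
      ENNReal.ofReal (2 ^ d * (∏ i, Real.Gamma (1 + 1 / p i)) /
        Real.Gamma (1 + ∑ i, 1 / p i)) := by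
  set s := ∑ i, 1 / p i
  have hs : 0 ≤ s := Finset.sum_nonneg fun i _ => (one_div_pos.mpr (hp i)).le
  have hΓball := lintegral_exp_neg_eq_Gamma_mul_measure_le_one (by fun_prop)
    (fun x => by positivity) (by linarith : -1 < s) (fun u hu => volume_sum_abs_rpow_le hp hu)
  have hprod : ∏ i, 2 * Gamma (1 / p i + 1) = 2 ^ d * ∏ i, Gamma (1 + 1 / p i) := by
    simp_rw [Finset.prod_mul_distrib, Finset.prod_const, Finset.card_univ, Fintype.card_fin,
      add_comm _ (1 : ℝ)]
  rw [lintegral_exp_neg_sum_abs_rpow hp, hprod] at hΓball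
  have hΓ : 0 < Gamma (s + 1) := Gamma_pos_of_pos (by linarith)
  rw [add_comm 1 s, ENNReal.ofReal_div_of_pos hΓ,
    ENNReal.eq_div_iff (by positivity) ENNReal.ofReal_ne_top, hΓball]
end

section
/- Let d ≥ 2, r > 0, δ ∈ (0, π), and let C_{δ,r} be the intersection of the cone {x ∈ R^d : x_1 tan(δ/2) > sqrt(x_2² + ··· + x_d²)} with the Euclidean ball of radius r. Then the Lebesgue volume of C_{δ,r} equals ω_{d−1} r^d [ (1/d) sin^{d−1}(δ/2) cos(δ/2) + (1/2)( B(1/2, (d+1)/2) − B(cos²(δ/2); 1/2, (d+1)/2) ) ], where ω_{d−1} is the volume of the unit ball in R^{d−1}. -/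
open MeasureTheory Metric

/-- The Beta function `B(a,b) = ∫₀¹ t^{a-1}(1-t)^{b-1} dt`. -/
noncomputable def betaFn (a b : ℝ) : ℝ := ∫ t in (0:ℝ)..1, t ^ (a - 1) * (1 - t) ^ (b - 1)

/-- The incomplete Beta function `B(x;a,b) = ∫₀^x t^{a-1}(1-t)^{b-1} dt`. -/
noncomputable def incBetaFn (x a b : ℝ) : ℝ := ∫ t in (0:ℝ)..x, t ^ (a - 1) * (1 - t) ^ (b - 1)

/-!
Split `ℝ^d = ℝ × ℝ^(d-1)` along the axis of the cone. For `0 < t ≤ r` the slice of `C_{δ,r}` at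
height `t` is the intersection of two concentric balls, of radii `t tan(δ/2)` and `√(r² - t²)`,
so by Cavalieri the volume is `ω_{d-1} ∫₀ʳ min (t tan(δ/2), √(r² - t²))^(d-1) dt`. The two radii
cross at `t = r cos(δ/2)`: below it the integrand is a monomial, giving the cone term, and above it
the substitution `t = r √s` turns the integral into the tail `B(1/2, (d+1)/2) - B(cos²(δ/2); …)`
of the Beta integral.
-/

open Real Set Module intervalIntegral

theorem betaFn_sub_incBetaFn {a b : ℝ} (ha : 0 < a) (hb : 1 ≤ b) (x : ℝ) :
    betaFn a b - incBetaFn x a b = ∫ t in x..1, t ^ (a - 1) * (1 - t) ^ (b - 1) := by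
  have hint (u v : ℝ) :
      IntervalIntegrable (fun t : ℝ => t ^ (a - 1) * (1 - t) ^ (b - 1)) volume u v :=
    (intervalIntegrable_rpow' (by linarith)).mul_continuousOn
      ((continuous_const.sub continuous_id).rpow_const fun _ => Or.inr (by linarith)).continuousOn
  exact integral_interval_sub_left (hint 0 1) (hint 0 x)

theorem integral_one_sub_sq_rpow {p c : ℝ} (hp : 0 ≤ p) (hc : 0 < c) :
    ∫ u in c..1, (1 - u ^ 2) ^ p =
      1 / 2 * (betaFn (1 / 2) (p + 1) - incBetaFn (c ^ 2) (1 / 2) (p + 1)) := by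
  have hpos : ∀ u ∈ uIcc c 1, 0 < u := fun u hu => lt_of_lt_of_le (lt_min hc one_pos) hu.1
  have hsubst := integral_comp_mul_deriv' (a := c) (b := 1) (f := fun u => u ^ 2)
    (f' := fun u => 2 * u) (g := fun t => t ^ ((1 / 2 : ℝ) - 1) * (1 - t) ^ (p + 1 - 1))
    (fun u _ => by simpa using hasDerivAt_pow 2 u) (by fun_prop) ?_
  · rw [one_pow] at hsubst
    rw [betaFn_sub_incBetaFn (by norm_num) (by linarith), ← hsubst,
      ← intervalIntegral.integral_const_mul]
    refine integral_congr fun u hu => ?_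
    have hu := hpos u hu
    simp only [Function.comp_apply, add_sub_cancel_right]
    rw [← Real.rpow_natCast_mul hu.le, show ((2 : ℕ) : ℝ) * (1 / 2 - 1) = -1 by norm_num,
      Real.rpow_neg_one]
    field_simp
  · rintro _ ⟨u, hu, rfl⟩
    have := hpos u hu
    refine ContinuousAt.continuousWithinAt (ContinuousAt.mul ?_ ?_)
    · exact Real.continuousAt_rpow_const _ _ (Or.inl (by positivity))
    · exact ((continuous_const.sub continuous_id).rpow_const
        fun _ => Or.inr (by linarith)).continuousAt

theorem integral_sqrt_sq_sub_sq_pow (n : ℕ) {r c : ℝ} (hr : 0 < r) (hc : 0 < c) (hc1 : c ≤ 1) :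
    ∫ t in r * c..r, √(r ^ 2 - t ^ 2) ^ n =
      r ^ (n + 1) *
        (1 / 2 * (betaFn (1 / 2) (n / 2 + 1) - incBetaFn (c ^ 2) (1 / 2) (n / 2 + 1))) := by
  have hscale := integral_comp_mul_left (fun t => √(r ^ 2 - t ^ 2) ^ n) (a := c) (b := 1) hr.ne'
  rw [mul_one] at hscale
  have hunit : ∫ u in c..1, √(r ^ 2 - (r * u) ^ 2) ^ n =
      r ^ n * ∫ u in c..1, (1 - u ^ 2) ^ ((n : ℝ) / 2) := by
    rw [← intervalIntegral.integral_const_mul]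
    refine integral_congr fun u hu => ?_
    rw [uIcc_of_le hc1] at hu
    have h1u : 0 ≤ 1 - u ^ 2 := by nlinarith [hu.1, hu.2]
    rw [show r ^ 2 - (r * u) ^ 2 = r ^ 2 * (1 - u ^ 2) by ring, Real.sqrt_mul (sq_nonneg r),
      Real.sqrt_sq hr.le, mul_pow, rpow_div_two_eq_sqrt _ h1u, Real.rpow_natCast]
  rw [hunit, smul_eq_mul] at hscale
  rw [← integral_one_sub_sq_rpow (by positivity) hc, pow_succ' r n, mul_assoc, hscale,
    mul_inv_cancel_left₀ hr.ne']

theorem sq_mul_tan_sub_eq {θ : ℝ} (hcos : cos θ ≠ 0) (r t : ℝ) :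
    (t * tan θ) ^ 2 - (r ^ 2 - t ^ 2) = (t ^ 2 - (r * cos θ) ^ 2) / cos θ ^ 2 := by
  rw [tan_eq_sin_div_cos]
  field_simp
  rw [sin_sq]
  ring

theorem mul_tan_le_sqrt_sq_sub_sq {θ r t : ℝ} (hcos : cos θ ≠ 0) (ht : 0 ≤ t)
    (htr : t ≤ r * cos θ) : t * tan θ ≤ √(r ^ 2 - t ^ 2) := by
  refine Real.le_sqrt_of_sq_le (sub_nonpos.1 ?_)
  rw [sq_mul_tan_sub_eq hcos]
  exact div_nonpos_of_nonpos_of_nonneg (by nlinarith) (sq_nonneg _)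

theorem sqrt_sq_sub_sq_le_mul_tan {θ r t : ℝ} (hcos : 0 < cos θ) (htan : 0 ≤ tan θ) (hr : 0 ≤ r)
    (htr : r * cos θ ≤ t) : √(r ^ 2 - t ^ 2) ≤ t * tan θ := by
  have hrc : 0 ≤ r * cos θ := by positivity
  rw [Real.sqrt_le_left (mul_nonneg (hrc.trans htr) htan), ← sub_nonneg,
    sq_mul_tan_sub_eq hcos.ne']
  exact div_nonneg (by nlinarith) (sq_nonneg _)

theorem integral_min_mul_tan_sqrt_sq_sub_sq_pow (n : ℕ) {θ r : ℝ} (hθ : θ ∈ Ioo 0 (π / 2))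
    (hr : 0 < r) :
    ∫ t in 0..r, min (t * tan θ) √(r ^ 2 - t ^ 2) ^ n =
      r ^ (n + 1) * (1 / (n + 1) * sin θ ^ n * cos θ +
        1 / 2 * (betaFn (1 / 2) (n / 2 + 1) - incBetaFn (cos θ ^ 2) (1 / 2) (n / 2 + 1))) := by
  have hcos : 0 < cos θ := cos_pos_of_mem_Ioo ⟨by linarith [hθ.1, pi_pos], hθ.2⟩
  have htan : 0 < tan θ := tan_pos_of_pos_of_lt_pi_div_two hθ.1 hθ.2
  have hbreak : r * cos θ ≤ r := mul_le_of_le_one_right hr.le (cos_le_one θ)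
  have hcont : Continuous fun t => min (t * tan θ) √(r ^ 2 - t ^ 2) ^ n := by fun_prop
  have hcone : ∫ t in 0..r * cos θ, min (t * tan θ) √(r ^ 2 - t ^ 2) ^ n =
      r ^ (n + 1) * (1 / (n + 1) * sin θ ^ n * cos θ) := by
    have hmin : EqOn (fun t => min (t * tan θ) √(r ^ 2 - t ^ 2) ^ n)
        (fun t => tan θ ^ n * t ^ n) (uIcc 0 (r * cos θ)) := fun t ht => by
      rw [uIcc_of_le (by positivity)] at ht
      simp only [min_eq_left (mul_tan_le_sqrt_sq_sub_sq hcos.ne' ht.1 ht.2), mul_pow, mul_comm]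
    rw [integral_congr hmin, intervalIntegral.integral_const_mul, integral_pow,
      ← tan_mul_cos hcos.ne']
    field_simp
    ring
  have hball : ∫ t in r * cos θ..r, min (t * tan θ) √(r ^ 2 - t ^ 2) ^ n =
      ∫ t in r * cos θ..r, √(r ^ 2 - t ^ 2) ^ n := by
    refine integral_congr fun t ht => ?_
    rw [uIcc_of_le hbreak] at ht
    simp only [min_eq_right (sqrt_sq_sub_sq_le_mul_tan hcos htan.le hr.le ht.1)]
  rw [← integral_add_adjacent_intervals (b := r * cos θ) (hcont.intervalIntegrable _ _)
    (hcont.intervalIntegrable _ _), hcone, hball,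
    integral_sqrt_sq_sub_sq_pow n hr hcos (cos_le_one θ), mul_add]

section TruncatedCone

variable {E : Type*} [NormedAddCommGroup E] [MeasurableSpace E] [BorelSpace E]

variable (E) in
/-- The cone `C_{δ,r}` in coordinates `(x₁, (x₂, …, x_d))`, with slope `k = tan (δ / 2)`. -/
def truncatedConeProd (k r : ℝ) : Set (ℝ × E) :=
  {p | ‖p.2‖ < p.1 * k ∧ p.1 ^ 2 + ‖p.2‖ ^ 2 ≤ r ^ 2}

theorem measurableSet_truncatedConeProd (k r : ℝ) : MeasurableSet (truncatedConeProd E k r) := by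
  simp only [truncatedConeProd, ofPred_and]
  exact (measurableSet_lt (by fun_prop) (by fun_prop)).inter
    (measurableSet_le (by fun_prop) (by fun_prop))

variable [NormedSpace ℝ E] [FiniteDimensional ℝ E] (μ : Measure E) [μ.IsAddHaarMeasure]

theorem addHaar_ball_inter_closedBall (x : E) {a b : ℝ} (ha : 0 < a) (hb : 0 ≤ b) :
    μ (ball x a ∩ closedBall x b) =
      ENNReal.ofReal (min a b ^ finrank ℝ E) * μ (closedBall 0 1) := by
  rcases le_or_gt a b with hab | hba
  · rw [inter_eq_self_of_subset_left
        (ball_subset_closedBall.trans (closedBall_subset_closedBall hab)), min_eq_left hab,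
      Measure.addHaar_ball_of_pos μ x ha, Measure.addHaar_unitClosedBall_eq_addHaar_unitBall]
  · rw [inter_eq_self_of_subset_right (closedBall_subset_ball hba), min_eq_right hba.le,
      Measure.addHaar_closedBall' μ x hb]

theorem addHaar_prodMk_preimage_truncatedConeProd {k r : ℝ} (hk : 0 < k) (hr : 0 ≤ r) (t : ℝ) :
    μ (Prod.mk t ⁻¹' truncatedConeProd E k r) = (Ioc 0 r).indicator
      (fun t => ENNReal.ofReal (min (t * k) √(r ^ 2 - t ^ 2) ^ finrank ℝ E) * μ (closedBall 0 1))
        t := by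
  by_cases ht : t ∈ Ioc 0 r
  · have hsection : Prod.mk t ⁻¹' truncatedConeProd E k r =
        ball 0 (t * k) ∩ closedBall 0 √(r ^ 2 - t ^ 2) := by
      have hrt : 0 ≤ r ^ 2 - t ^ 2 := by nlinarith [ht.1, ht.2]
      ext y
      simp only [truncatedConeProd, mem_preimage, mem_ofPred_eq, mem_inter_iff, mem_ball_zero_iff,
        mem_closedBall_zero_iff, Real.le_sqrt (norm_nonneg y) hrt]
      constructor <;> rintro ⟨h1, h2⟩ <;> exact ⟨h1, by linarith⟩
    rw [hsection, indicator_of_mem ht,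
      addHaar_ball_inter_closedBall μ 0 (mul_pos ht.1 hk) (Real.sqrt_nonneg _)]
  · rw [indicator_of_notMem ht, ← measure_empty (μ := μ)]
    congr 1
    refine eq_empty_of_forall_notMem fun y ⟨hcone, hball⟩ => ht ⟨?_, ?_⟩
    · by_contra! h
      nlinarith [norm_nonneg y]
    · nlinarith [norm_nonneg y]

theorem volume_prod_truncatedConeProd {k r : ℝ} (hk : 0 < k) (hr : 0 ≤ r) :
    (volume.prod μ) (truncatedConeProd E k r) =
      ENNReal.ofReal (∫ t in 0..r, min (t * k) √(r ^ 2 - t ^ 2) ^ finrank ℝ E) *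
        μ (closedBall 0 1) := by
  have hcont : Continuous fun t : ℝ => min (t * k) √(r ^ 2 - t ^ 2) ^ finrank ℝ E := by fun_prop
  rw [Measure.prod_apply (measurableSet_truncatedConeProd k r),
    lintegral_congr (addHaar_prodMk_preimage_truncatedConeProd μ hk hr),
    lintegral_indicator measurableSet_Ioc, lintegral_mul_const _ (by fun_prop),
    intervalIntegral.integral_of_le hr, ofReal_integral_eq_lintegral_ofReal hcont.integrableOn_Ioc]
  refine (ae_restrict_iff' measurableSet_Ioc).2 (Filter.Eventually.of_forall fun t ht => ?_)
  exact pow_nonneg (le_min (mul_pos ht.1 hk).le (Real.sqrt_nonneg _)) _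

end TruncatedCone

namespace EuclideanSpace

def finSuccMeasurableEquiv (n : ℕ) :
    EuclideanSpace ℝ (Fin (n + 1)) ≃ᵐ ℝ × EuclideanSpace ℝ (Fin n) :=
  (MeasurableEquiv.toLp 2 _).symm.trans <| (MeasurableEquiv.piFinSuccAbove (fun _ => ℝ) 0).trans <|
    (MeasurableEquiv.refl ℝ).prodCongr (MeasurableEquiv.toLp 2 _)

theorem measurePreserving_finSuccMeasurableEquiv (n : ℕ) :
    MeasurePreserving (finSuccMeasurableEquiv n) := by
  refine (volume_preserving_symm_measurableEquiv_toLp _).trans <|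
    (volume_preserving_piFinSuccAbove _ 0).trans ?_
  exact (MeasurePreserving.id volume).prod (PiLp.volume_preserving_toLp _)

@[simp]
theorem finSuccMeasurableEquiv_apply_fst {n : ℕ} (x : EuclideanSpace ℝ (Fin (n + 1))) :
    (finSuccMeasurableEquiv n x).1 = x 0 := rfl

@[simp]
theorem finSuccMeasurableEquiv_apply_snd {n : ℕ} (x : EuclideanSpace ℝ (Fin (n + 1))) (j : Fin n) :
    (finSuccMeasurableEquiv n x).2 j = x j.succ := rfl

theorem norm_finSuccMeasurableEquiv_snd_sq {n : ℕ} (x : EuclideanSpace ℝ (Fin (n + 1))) :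
    ‖(finSuccMeasurableEquiv n x).2‖ ^ 2 = ∑ j : Fin n, x j.succ ^ 2 := by
  simp [real_norm_sq_eq]

theorem norm_sq_eq_fst_sq_add_norm_snd_sq {n : ℕ} (x : EuclideanSpace ℝ (Fin (n + 1))) :
    ‖x‖ ^ 2 = x 0 ^ 2 + ‖(finSuccMeasurableEquiv n x).2‖ ^ 2 := by
  rw [real_norm_sq_eq, Fin.sum_univ_succ, norm_finSuccMeasurableEquiv_snd_sq]

theorem preimage_finSuccMeasurableEquiv_truncatedConeProd (n : ℕ) (k : ℝ) {r : ℝ}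
    (hr : 0 ≤ r) :
    finSuccMeasurableEquiv n ⁻¹' truncatedConeProd _ k r =
      {x : EuclideanSpace ℝ (Fin (n + 1)) |
        √(∑ i ∈ Finset.univ.filter (fun i : Fin (n + 1) => i.val ≠ 0), x i ^ 2) <
          x ⟨0, n.succ_pos⟩ * k} ∩ closedBall 0 r := by
  ext x
  simp only [truncatedConeProd, mem_inter_iff, mem_ofPred_eq, mem_closedBall_zero_iff,
    mem_preimage, finSuccMeasurableEquiv_apply_fst, ← norm_sq_eq_fst_sq_add_norm_snd_sq,
    sq_le_sq₀ (norm_nonneg x) hr, Finset.sum_filter, Fin.sum_univ_succ]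
  simp [← norm_finSuccMeasurableEquiv_snd_sq, Real.sqrt_sq (norm_nonneg _)]

end EuclideanSpace

/-- Volume of the truncated cone `C_{δ,r}` of opening angle `δ` and radius `r` in `ℝ^d`. -/
theorem volume_truncated_cone (d : ℕ) (hd : 2 ≤ d) (r δ : ℝ) (hr : 0 < r)
    (hδ : δ ∈ Set.Ioo 0 Real.pi) :
    volume ({x : EuclideanSpace ℝ (Fin d) |
        Real.sqrt (∑ i ∈ Finset.univ.filter (fun i : Fin d => i.val ≠ 0), x i ^ 2) <
          x ⟨0, by omega⟩ * Real.tan (δ / 2)} ∩ closedBall 0 r) =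
      volume (closedBall (0 : EuclideanSpace ℝ (Fin (d - 1))) 1) *
        ENNReal.ofReal (r ^ d *
          ((1 / (d : ℝ)) * Real.sin (δ / 2) ^ (d - 1) * Real.cos (δ / 2) +
            (1 / 2) * (betaFn (1 / 2) (((d : ℝ) + 1) / 2) -
              incBetaFn (Real.cos (δ / 2) ^ 2) (1 / 2) (((d : ℝ) + 1) / 2)))) := by
  obtain ⟨n, rfl⟩ : ∃ n, d = n + 1 := ⟨d - 1, by omega⟩
  have hθ : δ / 2 ∈ Ioo 0 (π / 2) := ⟨by linarith [hδ.1], by linarith [hδ.2]⟩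
  rw [← EuclideanSpace.preimage_finSuccMeasurableEquiv_truncatedConeProd n _ hr.le,
    (EuclideanSpace.measurePreserving_finSuccMeasurableEquiv n).measure_preimage
      (measurableSet_truncatedConeProd _ _).nullMeasurableSet, Measure.volume_eq_prod,
    volume_prod_truncatedConeProd _ (tan_pos_of_pos_of_lt_pi_div_two hθ.1 hθ.2) hr.le,
    finrank_euclideanSpace_fin, integral_min_mul_tan_sqrt_sq_sub_sq_pow n hθ hr, mul_comm,
    Nat.add_sub_cancel, Nat.cast_succ, show ((n : ℝ) + 1 + 1) / 2 = n / 2 + 1 by ring]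
end

section
/- Let X, Y ∈ R^{d×n}. Then the ∞-Wasserstein distance between their empirical measures satisfies W_∞(M(X), M(Y)) = min_{π ∈ S_n} max_{1 ≤ i ≤ n} ‖X_{:,i} − Y_{:,π(i)}‖. -/
open MeasureTheory
open scoped ENNReal

/-- The empirical measure `(1/n) Σ_i δ_{X i}` of a finite sequence of points. -/
noncomputable def empiricalMeasure {E : Type*} [MeasurableSpace E] {n : ℕ}
    (X : Fin n → E) : Measure E :=
  (n : ℝ≥0∞)⁻¹ • ∑ i, Measure.dirac (X i)

/-- The `∞`-Wasserstein distance: infimum over couplings of the essential supremum of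
`‖x - y‖`. -/
noncomputable def wassersteinInfDist {E : Type*} [MeasurableSpace E] [NormedAddCommGroup E]
    (μ ν : Measure E) : ℝ :=
  sInf {c : ℝ | ∃ π : Measure (E × E), π.map Prod.fst = μ ∧ π.map Prod.snd = ν ∧
    ∀ᵐ p ∂π, ‖p.1 - p.2‖ ≤ c}

/-!
A coupling `π` of `M(X)` and `M(Y)` concentrated on `{(x, y) | ‖x - y‖ ≤ c}` transports the mass
`#A / n` of `X '' A` into the `c`-neighbourhood of `X '' A`, so for every set `A` of indices at
least `#A` indices `j` have `Y j` within `c` of some `X i` with `i ∈ A`. Hall's marriage theorem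
then gives a permutation `σ` with `‖X i - Y (σ i)‖ ≤ c` for all `i`; conversely such a `σ` gives
the coupling `(1/n) Σ_i δ_(X i, Y (σ i))`. Hence the admissible constants `c` form the ray
`[min_σ max_i ‖X i - Y (σ i)‖, ∞)`.
-/

open Finset

section EmpiricalMeasure

variable {E : Type*} [MeasurableSpace E] {n : ℕ}

theorem empiricalMeasure_apply [MeasurableSingletonClass E] (X : Fin n → E) (s : Set E)
    [DecidablePred (· ∈ s)] :
    empiricalMeasure X s = (n : ℝ≥0∞)⁻¹ * #{i | X i ∈ s} := by
  simp [empiricalMeasure, Measure.dirac_apply, Set.indicator_apply, Finset.sum_boole]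

theorem map_empiricalMeasure {F : Type*} [MeasurableSpace F] {f : E → F} (hf : Measurable f)
    (X : Fin n → E) : (empiricalMeasure X).map f = empiricalMeasure (f ∘ X) := by
  simp [empiricalMeasure, Measure.map_smul, Measure.map_finset_sum' hf.aemeasurable,
    Measure.map_dirac' hf]

theorem empiricalMeasure_comp_perm (X : Fin n → E) (σ : Equiv.Perm (Fin n)) :
    empiricalMeasure (X ∘ σ) = empiricalMeasure X := by
  simp only [empiricalMeasure, Function.comp_apply, Equiv.sum_comp σ fun i => Measure.dirac (X i)]

theorem ae_empiricalMeasure_iff [MeasurableSingletonClass E] {X : Fin n → E} {p : E → Prop} :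
    (∀ᵐ x ∂empiricalMeasure X, p x) ↔ ∀ i, p (X i) := by
  simp [empiricalMeasure, ae_dirac_eq]

end EmpiricalMeasure

section Coupling

variable {E : Type*} [MeasurableSpace E] [MeasurableSingletonClass E] {n : ℕ}
  {X Y : Fin n → E} {R : E → E → Prop} {π : Measure (E × E)}

theorem card_le_card_biUnion_of_coupling [DecidableRel R] (hn : 0 < n)
    (h₁ : π.map Prod.fst = empiricalMeasure X) (h₂ : π.map Prod.snd = empiricalMeasure Y)
    (hR : ∀ᵐ p ∂π, R p.1 p.2) (A : Finset (Fin n)) :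
    #A ≤ #(A.biUnion fun i => {j | R (X i) (Y j)}) := by
  classical
  set S : Set E := X '' A
  set T : Set E := {y | ∃ i ∈ A, R (X i) y}
  have hST : Prod.fst ⁻¹' S ≤ᵐ[π] Prod.snd ⁻¹' T := by
    filter_upwards [hR] with p hp
    rintro ⟨i, hi, hpi⟩
    exact ⟨i, hi, hpi ▸ hp⟩
  have hmass : empiricalMeasure X S ≤ empiricalMeasure Y T := calc
    empiricalMeasure X S = π (Prod.fst ⁻¹' S) := by
      rw [← h₁, Measure.map_apply measurable_fst (A.finite_toSet.image X).measurableSet]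
    _ ≤ π (Prod.snd ⁻¹' T) := measure_mono_ae hST
    _ ≤ empiricalMeasure Y T := h₂ ▸ Measure.le_map_apply measurable_snd.aemeasurable T
  rw [empiricalMeasure_apply, empiricalMeasure_apply,
    ENNReal.mul_le_mul_iff_right (by simp) (by simp [hn.ne'])] at hmass
  calc #A ≤ #{i | X i ∈ S} := card_le_card fun i hi => by simpa using ⟨i, hi, rfl⟩
    _ ≤ #{j | Y j ∈ T} := by exact_mod_cast hmass
    _ = #(A.biUnion fun i => {j | R (X i) (Y j)}) := by congr 1; ext j; simp [T]

theorem exists_coupling_empiricalMeasure_iff (hn : 0 < n) :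
    (∃ π : Measure (E × E), π.map Prod.fst = empiricalMeasure X ∧
      π.map Prod.snd = empiricalMeasure Y ∧ ∀ᵐ p ∂π, R p.1 p.2) ↔
      ∃ σ : Equiv.Perm (Fin n), ∀ i, R (X i) (Y (σ i)) := by
  classical
  constructor
  · rintro ⟨π, h₁, h₂, hR⟩
    obtain ⟨f, hf, hfR⟩ := (all_card_le_biUnion_card_iff_exists_injective _).1
      (card_le_card_biUnion_of_coupling hn h₁ h₂ hR)
    exact ⟨.ofBijective f (Finite.injective_iff_bijective.1 hf), fun i => by simpa using hfR i⟩
  · rintro ⟨σ, hσ⟩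
    refine ⟨empiricalMeasure fun i => (X i, Y (σ i)), ?_, ?_, ae_empiricalMeasure_iff.2 hσ⟩
    · exact map_empiricalMeasure measurable_fst _
    · exact (map_empiricalMeasure measurable_snd _).trans (empiricalMeasure_comp_perm Y σ)

end Coupling

/-- For empirical measures of two sequences of equal length `n`,
`W_∞(M(X), M(Y)) = min_{π ∈ S_n} max_i ‖X_i − Y_{π(i)}‖`. -/
theorem wassersteinInf_empirical_eq_min_perm (d n : ℕ) (hn : 0 < n)
    (X Y : Fin n → EuclideanSpace ℝ (Fin d)) :
    wassersteinInfDist (empiricalMeasure X) (empiricalMeasure Y) =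
      ⨅ π : Equiv.Perm (Fin n), ⨆ i : Fin n, ‖X i - Y (π i)‖ := by
  have : Nonempty (Fin n) := ⟨⟨0, hn⟩⟩
  set cost : Equiv.Perm (Fin n) → ℝ := fun σ => ⨆ i, ‖X i - Y (σ i)‖
  obtain ⟨σ₀, hσ₀⟩ := exists_eq_ciInf_of_finite (f := cost)
  suffices hadm : {c : ℝ | ∃ π : Measure _, π.map Prod.fst = empiricalMeasure X ∧
      π.map Prod.snd = empiricalMeasure Y ∧ ∀ᵐ p ∂π, ‖p.1 - p.2‖ ≤ c} = Set.Ici (⨅ σ, cost σ) from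
    (congrArg sInf hadm).trans csInf_Ici
  ext c
  refine (exists_coupling_empiricalMeasure_iff (R := fun x y => ‖x - y‖ ≤ c) hn).trans ⟨?_, ?_⟩
  · rintro ⟨σ, hσ⟩
    exact (ciInf_le (Finite.bddBelow_range cost) σ).trans (ciSup_le hσ)
  · intro hc
    exact ⟨σ₀, fun i => (le_ciSup (Finite.bddAbove_range _) i).trans (hσ₀.trans_le hc)⟩
end
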